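/- For all but countably many pairs (θ₁, θ₂) in (0,π)×(0,π) and for fixed nonnegative integers k₁, k₂ ∈ {0,1,2}, the limit as T,S → ∞ of (1/(T^{k₁+1} S^{k₂+1})) Σ_{t=1}^{T} Σ_{s=1}^{S} t^{k₁} s^{k₂} sin²(θ₁ t + θ₂ s) equals 1/(2(k₁+1)(k₂+1)). -/

import Mathlib

/-
Since `sin² u = (1 - cos 2u) / 2` and `cos 2(θ₁ t + θ₂ s) = Re (z₁ ^ t * z₂ ^ s)` with
`zᵢ = exp (2 i θᵢ)`, the double sum is `½ (∑ t ^ k₁) (∑ s ^ k₂)` minus `½ Re` of a product of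
two one-variable sums `∑ t ^ k * z ^ t`. Telescoping gives
`n ^ (k+1) ≤ (k+1) ∑_{t ≤ n} t ^ k ≤ (n+1) ^ (k+1)`, so the first term has the stated limit.
For `θ ∈ (0, π)` we have `z ≠ 1`, so the partial sums of the geometric series in `z` are
bounded, and Abel summation gives `∑_{t ≤ n} t ^ k z ^ t = O(n ^ k)`: after dividing by
`n ^ (k+1)` the oscillating term vanishes.
-/

open Filter Real Topology Finset

lemma pow_succ_add_mul_pow_le_add_one_pow_succ {x : ℝ} (hx : 0 ≤ x) (k : ℕ) :
    x ^ (k + 1) + (k + 1) * x ^ k ≤ (x + 1) ^ (k + 1) := by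
  induction k with
  | zero => simp
  | succ k ih =>
    push_cast
    calc x ^ (k + 2) + (k + 1 + 1) * x ^ (k + 1)
        ≤ x ^ (k + 2) + (k + 1 + 1) * x ^ (k + 1) + (k + 1) * x ^ k := by
          have : 0 ≤ (k + 1 : ℝ) * x ^ k := by positivity
          linarith
      _ = (x + 1) * (x ^ (k + 1) + (k + 1) * x ^ k) := by ring
      _ ≤ (x + 1) * (x + 1) ^ (k + 1) := by gcongr
      _ = (x + 1) ^ (k + 2) := by ring

lemma add_one_pow_succ_le_pow_succ_add_mul_add_one_pow {x : ℝ} (hx : 0 ≤ x) (k : ℕ) :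
    (x + 1) ^ (k + 1) ≤ x ^ (k + 1) + (k + 1) * (x + 1) ^ k := by
  induction k with
  | zero => simp
  | succ k ih =>
    have hle : x ^ (k + 1) ≤ (x + 1) ^ (k + 1) := by gcongr; linarith
    push_cast
    calc (x + 1) ^ (k + 2) = (x + 1) * (x + 1) ^ (k + 1) := by ring
      _ ≤ (x + 1) * (x ^ (k + 1) + (k + 1) * (x + 1) ^ k) := by gcongr
      _ = x ^ (k + 2) + x ^ (k + 1) + (k + 1) * (x + 1) ^ (k + 1) := by ring
      _ ≤ x ^ (k + 2) + (k + 1 + 1) * (x + 1) ^ (k + 1) := by linarith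

lemma pow_succ_le_mul_sum_Icc_pow (k n : ℕ) :
    (n : ℝ) ^ (k + 1) ≤ (k + 1) * ∑ t ∈ Icc 1 n, (t : ℝ) ^ k := by
  induction n with
  | zero => simp
  | succ n ih =>
    rw [sum_Icc_succ_top (by omega), mul_add]
    push_cast
    linarith [add_one_pow_succ_le_pow_succ_add_mul_add_one_pow (Nat.cast_nonneg (α := ℝ) n) k]

lemma mul_sum_Icc_pow_le_add_one_pow_succ (k n : ℕ) :
    (k + 1) * ∑ t ∈ Icc 1 n, (t : ℝ) ^ k ≤ ((n : ℝ) + 1) ^ (k + 1) := by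
  induction n with
  | zero => simp
  | succ n ih =>
    rw [sum_Icc_succ_top (by omega), mul_add]
    push_cast
    linarith [pow_succ_add_mul_pow_le_add_one_pow_succ (by positivity : (0 : ℝ) ≤ n + 1) k]

lemma tendsto_sum_Icc_pow_div_pow_succ (k : ℕ) :
    Tendsto (fun n : ℕ => (∑ t ∈ Icc 1 n, (t : ℝ) ^ k) / (n : ℝ) ^ (k + 1))
      atTop (𝓝 (1 / (k + 1))) := by
  have hk : (0 : ℝ) < k + 1 := by positivity
  have hupper : Tendsto (fun n : ℕ => (1 + 1 / (n : ℝ)) ^ (k + 1) / (k + 1))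
      atTop (𝓝 (1 / (k + 1))) := by
    simpa using ((tendsto_const_nhds (x := (1 : ℝ))).add
      tendsto_one_div_atTop_nhds_zero_nat |>.pow (k + 1)).div_const ((k : ℝ) + 1)
  refine tendsto_of_tendsto_of_tendsto_of_le_of_le' tendsto_const_nhds hupper ?_ ?_
  · filter_upwards [eventually_gt_atTop 0] with n hn
    rw [div_le_div_iff₀ hk (by positivity)]
    linarith [pow_succ_le_mul_sum_Icc_pow k n]
  · filter_upwards [eventually_gt_atTop 0] with n hn
    have hn' : (0 : ℝ) < n := Nat.cast_pos.2 hn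
    rw [one_add_div hn'.ne', div_pow, div_div, div_le_div_iff₀ (by positivity) (by positivity)]
    nlinarith [mul_sum_Icc_pow_le_add_one_pow_succ k n, pow_pos hn' (k + 1)]

lemma norm_geom_sum_le {𝕜 : Type*} [NormedDivisionRing 𝕜] {z : 𝕜} (hz : ‖z‖ ≤ 1) (hz1 : z ≠ 1)
    (m : ℕ) : ‖∑ j ∈ range m, z ^ j‖ ≤ 2 / ‖z - 1‖ := by
  rw [geom_sum_eq hz1, norm_div]
  gcongr
  calc ‖z ^ m - 1‖ ≤ ‖z‖ ^ m + 1 := by simpa [norm_pow] using norm_sub_le (z ^ m) 1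
    _ ≤ 2 := by linarith [pow_le_one₀ (n := m) (norm_nonneg z) hz]

lemma norm_sum_range_smul_le_of_monotone {E : Type*} [NormedAddCommGroup E] [NormedSpace ℝ E]
    {f : ℕ → ℝ} {g : ℕ → E} {M : ℝ} (hf : Monotone f) (hf0 : 0 ≤ f 0)
    (hg : ∀ m, ‖∑ i ∈ range m, g i‖ ≤ M) (n : ℕ) :
    ‖∑ i ∈ range n, f i • g i‖ ≤ 2 * M * f (n - 1) := by
  have hM : 0 ≤ M := by simpa using hg 0
  have hdf : ∀ i, 0 ≤ f (i + 1) - f i := fun i => sub_nonneg.2 (hf i.le_succ)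
  rw [sum_range_by_parts]
  calc _ ≤ ‖f (n - 1) • ∑ i ∈ range n, g i‖ +
        ‖∑ i ∈ range (n - 1), (f (i + 1) - f i) • ∑ j ∈ range (i + 1), g j‖ := norm_sub_le _ _
    _ ≤ f (n - 1) * M + ∑ i ∈ range (n - 1), (f (i + 1) - f i) * M := by
        gcongr
        · rw [norm_smul, Real.norm_of_nonneg (hf0.trans (hf (n - 1).zero_le))]
          exact mul_le_mul_of_nonneg_left (hg n) (hf0.trans (hf (n - 1).zero_le))
        · refine (norm_sum_le _ _).trans (sum_le_sum fun i _ => ?_)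
          rw [norm_smul, Real.norm_of_nonneg (hdf i)]
          exact mul_le_mul_of_nonneg_left (hg _) (hdf i)
    _ = 2 * M * f (n - 1) - M * f 0 := by rw [← sum_mul, sum_range_sub]; ring
    _ ≤ 2 * M * f (n - 1) := by linarith [mul_nonneg hM hf0]

lemma norm_sum_Icc_pow_mul_pow_le {z : ℂ} (hz : ‖z‖ ≤ 1) (hz1 : z ≠ 1) (k n : ℕ) :
    ‖∑ t ∈ Icc 1 n, (t : ℂ) ^ k * z ^ t‖ ≤ 4 / ‖z - 1‖ * (n : ℝ) ^ k := by
  rcases n with _ | n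
  · simp only [Icc_eq_empty_of_lt zero_lt_one, sum_empty, norm_zero]; positivity
  have hshift : ∑ t ∈ Icc 1 (n + 1), (t : ℂ) ^ k * z ^ t
      = ∑ i ∈ range (n + 1), (((i + 1 : ℕ) : ℝ) ^ k) • z ^ (i + 1) := by
    rw [range_eq_Ico, sum_Ico_add' (fun t : ℕ => ((t : ℝ) ^ k) • z ^ t)]
    simp_rw [Complex.real_smul]
    push_cast
    rfl
  have hpartial : ∀ m, ‖∑ i ∈ range m, z ^ (i + 1)‖ ≤ 2 / ‖z - 1‖ := fun m => by
    simp_rw [pow_succ', ← mul_sum, norm_mul]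
    exact (mul_le_of_le_one_left (norm_nonneg _) hz).trans (norm_geom_sum_le hz hz1 m)
  have hmono : Monotone fun i : ℕ => ((i + 1 : ℕ) : ℝ) ^ k := fun i j hij =>
    pow_le_pow_left₀ (Nat.cast_nonneg _) (by exact_mod_cast Nat.succ_le_succ hij) k
  calc _ ≤ 2 * (2 / ‖z - 1‖) * ((n + 1 - 1 + 1 : ℕ) : ℝ) ^ k := by
        rw [hshift]
        exact norm_sum_range_smul_le_of_monotone hmono (by positivity) hpartial (n + 1)
    _ = 4 / ‖z - 1‖ * ((n + 1 : ℕ) : ℝ) ^ k := by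
        rw [Nat.add_sub_cancel]; ring

lemma tendsto_sum_Icc_pow_mul_pow_div_pow_succ {z : ℂ} (hz : ‖z‖ ≤ 1) (hz1 : z ≠ 1) (k : ℕ) :
    Tendsto (fun n : ℕ => (∑ t ∈ Icc 1 n, (t : ℂ) ^ k * z ^ t) / (n : ℂ) ^ (k + 1))
      atTop (𝓝 0) := by
  refine squeeze_zero_norm' ?_ (tendsto_const_div_atTop_nhds_zero_nat (4 / ‖z - 1‖))
  filter_upwards [eventually_gt_atTop 0] with n hn
  have hn' : (0 : ℝ) < n := by exact_mod_cast hn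
  rw [norm_div, norm_pow, Complex.norm_natCast, div_le_iff₀ (by positivity)]
  calc _ ≤ 4 / ‖z - 1‖ * (n : ℝ) ^ k := norm_sum_Icc_pow_mul_pow_le hz hz1 k n
    _ = _ := by field_simp; ring

lemma sum_sum_mul_sin_sq_add {ι κ : Type*} (I : Finset ι) (J : Finset κ) (a : ι → ℝ) (b : κ → ℝ)
    (x : ι → ℝ) (y : κ → ℝ) :
    ∑ i ∈ I, ∑ j ∈ J, a i * b j * sin (x i + y j) ^ 2
      = (∑ i ∈ I, a i) * (∑ j ∈ J, b j) / 2
        - ((∑ i ∈ I, (a i : ℂ) * Complex.exp (↑(2 * x i) * Complex.I)) *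
            (∑ j ∈ J, (b j : ℂ) * Complex.exp (↑(2 * y j) * Complex.I))).re / 2 := by
  simp only [sum_mul_sum, Complex.re_sum, sum_div, ← sum_sub_distrib]
  refine sum_congr rfl fun i _ => sum_congr rfl fun j _ => ?_
  have hprod : (a i : ℂ) * Complex.exp (↑(2 * x i) * Complex.I) *
      ((b j : ℂ) * Complex.exp (↑(2 * y j) * Complex.I))
      = ↑(a i * b j) * Complex.exp (↑(2 * (x i + y j)) * Complex.I) := by
    rw [mul_mul_mul_comm, ← Complex.exp_add]
    push_cast
    ring_nf
  rw [hprod, Complex.re_ofReal_mul, Complex.exp_ofReal_mul_I_re, sin_sq_eq_half_sub]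
  ring

lemma Complex.exp_two_mul_mul_I_ne_one {θ : ℝ} (hθ : θ ∈ Set.Ioo 0 π) :
    Complex.exp (↑(2 * θ) * Complex.I) ≠ 1 := by
  intro h
  have hcos : Real.cos (2 * θ) = 1 := by
    rw [← Complex.exp_ofReal_mul_I_re, h, Complex.one_re]
  have hsin : 0 < Real.sin θ := Real.sin_pos_of_pos_of_lt_pi hθ.1 hθ.2
  nlinarith [Real.cos_sq_add_sin_sq θ, Real.cos_two_mul θ]

lemma sum_Icc_sum_Icc_pow_mul_sin_sq (θ₁ θ₂ : ℝ) (k₁ k₂ T S : ℕ) :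
    ∑ t ∈ Icc 1 T, ∑ s ∈ Icc 1 S, (t : ℝ) ^ k₁ * (s : ℝ) ^ k₂ * sin (θ₁ * t + θ₂ * s) ^ 2
      = (∑ t ∈ Icc 1 T, (t : ℝ) ^ k₁) * (∑ s ∈ Icc 1 S, (s : ℝ) ^ k₂) / 2
        - ((∑ t ∈ Icc 1 T, (t : ℂ) ^ k₁ * Complex.exp (↑(2 * θ₁) * Complex.I) ^ t) *
            (∑ s ∈ Icc 1 S, (s : ℂ) ^ k₂ * Complex.exp (↑(2 * θ₂) * Complex.I) ^ s)).re / 2 := by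
  have hexp : ∀ (θ : ℝ) (t : ℕ),
      Complex.exp (↑(2 * (θ * t)) * Complex.I) = Complex.exp (↑(2 * θ) * Complex.I) ^ t := by
    intro θ t
    rw [← Complex.exp_nat_mul]
    push_cast
    ring_nf
  rw [sum_sum_mul_sin_sq_add]
  simp only [hexp]
  push_cast
  rfl

/-- Vinogradov-type averaging lemma for the 2-D sinusoidal model: for all but
countably many frequency pairs `(θ₁, θ₂)` in `(0,π) × (0,π)` and for
`k₁, k₂ ∈ {0,1,2}`, the normalized double sum converges as `T, S → ∞`. -/
theorem stmt_1 :
    ∃ C : Set (ℝ × ℝ), C.Countable ∧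
      ∀ θ₁ θ₂ : ℝ, θ₁ ∈ Set.Ioo 0 π → θ₂ ∈ Set.Ioo 0 π → (θ₁, θ₂) ∉ C →
        ∀ k₁ k₂ : ℕ, k₁ ∈ ({0, 1, 2} : Set ℕ) → k₂ ∈ ({0, 1, 2} : Set ℕ) →
          Tendsto
            (fun TS : ℕ × ℕ =>
              (1 / ((TS.1 : ℝ) ^ (k₁ + 1) * (TS.2 : ℝ) ^ (k₂ + 1))) *
                ∑ t ∈ Finset.Icc 1 TS.1, ∑ s ∈ Finset.Icc 1 TS.2,
                  (t : ℝ) ^ k₁ * (s : ℝ) ^ k₂ * (Real.sin (θ₁ * t + θ₂ * s) ^ 2))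
            (atTop ×ˢ atTop)
            (𝓝 (1 / (2 * (k₁ + 1) * (k₂ + 1)))) := by
  refine ⟨∅, Set.countable_empty, fun θ₁ θ₂ h₁ h₂ _ k₁ k₂ _ _ => ?_⟩
  have hnorm : ∀ θ : ℝ, ‖Complex.exp (↑(2 * θ) * Complex.I)‖ ≤ 1 :=
    fun θ => (Complex.norm_exp_ofReal_mul_I _).le
  have hmain := ((tendsto_sum_Icc_pow_div_pow_succ k₁).comp tendsto_fst).mul
    ((tendsto_sum_Icc_pow_div_pow_succ k₂).comp tendsto_snd)
  have herr := (Complex.continuous_re.tendsto _).comp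
    (((tendsto_sum_Icc_pow_mul_pow_div_pow_succ (hnorm θ₁)
        (Complex.exp_two_mul_mul_I_ne_one h₁) k₁).comp tendsto_fst).mul
      ((tendsto_sum_Icc_pow_mul_pow_div_pow_succ (hnorm θ₂)
        (Complex.exp_two_mul_mul_I_ne_one h₂) k₂).comp tendsto_snd))
  have hre : ∀ (P Q : ℂ) (x y a b : ℕ), (P / (x : ℂ) ^ a * (Q / (y : ℂ) ^ b)).re
      = (P * Q).re / ((x : ℝ) ^ a * (y : ℝ) ^ b) := fun P Q x y a b => by
    rw [div_mul_div_comm]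
    exact_mod_cast Complex.div_ofReal_re (P * Q) ((x : ℝ) ^ a * (y : ℝ) ^ b)
  convert (hmain.div_const 2).sub (herr.div_const 2) using 1
  · ext TS
    simp only [Function.comp_apply, sum_Icc_sum_Icc_pow_mul_sin_sq, hre]
    ring
  · simp only [mul_zero, Complex.zero_re, zero_div, sub_zero]
    field_simp
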